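/- Let f : 𝕊^n → ℝ be convex and β-smooth, and let X* be a minimizer of f over the spectrahedron S_n with rank(X*) = r, where 1 ≤ r < n. Let μ_1 ≥ ... ≥ μ_n denote the eigenvalues of ∇f(X*) in non-increasing order. Then μ_{n−r} = μ_n if and only if for every ζ > 0 it holds that rank(Π_{(1+ζ)S_n}[X* − β^{−1}∇f(X*)]) > r, where (1+ζ)S_n = {(1+ζ)X : X ∈ S_n} and Π_{(1+ζ)S_n}[·] denotes Euclidean projection onto (1+ζ)S_n. -/

import Mathlib

open scoped BigOperators
open MeasureTheory
open scoped Matrix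

namespace LRSGD

noncomputable def frobInner {n : ℕ} (A B : Matrix (Fin n) (Fin n) ℝ) : ℝ :=
  Matrix.trace (A * Bᵀ)

noncomputable def frobNorm {n : ℕ} (A : Matrix (Fin n) (Fin n) ℝ) : ℝ :=
  Real.sqrt (∑ i, ∑ j, (A i j) ^ 2)

noncomputable def specNorm {n : ℕ} (A : Matrix (Fin n) (Fin n) ℝ) : ℝ :=
  sSup {s : ℝ | ∃ u : Fin n → ℝ, (∑ k, u k ^ 2) = 1 ∧
    s = Real.sqrt (∑ i, (A.mulVec u i) ^ 2)}

def spectrahedron (n : ℕ) : Set (Matrix (Fin n) (Fin n) ℝ) :=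
  {X | X.PosSemidef ∧ X.trace = 1}

def IsProjOn {n : ℕ} (S : Set (Matrix (Fin n) (Fin n) ℝ))
    (M P : Matrix (Fin n) (Fin n) ℝ) : Prop :=
  P ∈ S ∧ ∀ Z ∈ S, frobNorm (M - P) ≤ frobNorm (M - Z)

def IsEigenDecomp {n : ℕ} (M : Matrix (Fin n) (Fin n) ℝ)
    (lam : Fin n → ℝ) (v : Fin n → Fin n → ℝ) : Prop :=
  Antitone lam ∧
  (∀ i j, (∑ k, v i k * v j k) = if i = j then (1 : ℝ) else 0) ∧
  M = ∑ i, lam i • Matrix.vecMulVec (v i) (v i)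

def IsGradient {n : ℕ} (f : Matrix (Fin n) (Fin n) ℝ → ℝ)
    (g : Matrix (Fin n) (Fin n) ℝ → Matrix (Fin n) (Fin n) ℝ) : Prop :=
  ∀ X H : Matrix (Fin n) (Fin n) ℝ,
    HasDerivAt (fun t : ℝ => f (X + t • H)) (frobInner (g X) H) 0

def IsMinimizerOn {n : ℕ} (f : Matrix (Fin n) (Fin n) ℝ → ℝ)
    (S : Set (Matrix (Fin n) (Fin n) ℝ)) (Xs : Matrix (Fin n) (Fin n) ℝ) : Prop :=
  Xs ∈ S ∧ ∀ Y ∈ S, f Xs ≤ f Y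


def scaledSpectrahedron (n : ℕ) (c : ℝ) : Set (Matrix (Fin n) (Fin n) ℝ) :=
  {X | ∃ Y ∈ spectrahedron n, X = c • Y}

/-!
First-order optimality puts `X*` in the bottom eigenspace of `∇f(X*)`, so the two matrices are
diagonal in a common orthonormal basis: `X* = V diag(σ) Vᵀ`, `∇f(X*) = V diag(μ) Vᵀ`, with `σ ≥ 0`,
`∑ σ = 1` and `σ` supported where `μ = μₙ`. The projection of `V diag(λ) Vᵀ` onto `c • Sₙ` is
`V diag((λ - θ)⁺) Vᵀ`, the threshold `θ` being fixed by `∑ (λ - θ)⁺ = c`. For `λ = σ - β⁻¹μ` and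
`c > 1`, the threshold lies below `-β⁻¹μₙ`, so every index with `μᵢ = μₙ` survives; conversely a
threshold slightly below `-β⁻¹μₙ` keeps exactly those indices and gives some `c > 1`. So the
projections have rank `> r` for every `ζ > 0` iff more than `r` eigenvalues equal `μₙ`, i.e. iff
`μ_{n-r} = μₙ`.
-/

open Matrix
open scoped Finset Topology

section Frobenius

variable {n : ℕ}

lemma frobInner_comm (A B : Matrix (Fin n) (Fin n) ℝ) : frobInner A B = frobInner B A := by
  rw [frobInner, frobInner, ← trace_transpose, transpose_mul, transpose_transpose]

lemma frobInner_sub_left (A B C : Matrix (Fin n) (Fin n) ℝ) :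
    frobInner (A - B) C = frobInner A C - frobInner B C := by
  simp only [frobInner, sub_mul, trace_sub]

lemma frobInner_sub_right (A B C : Matrix (Fin n) (Fin n) ℝ) :
    frobInner A (B - C) = frobInner A B - frobInner A C := by
  simp only [frobInner, transpose_sub, mul_sub, trace_sub]

lemma frobInner_self_nonneg (A : Matrix (Fin n) (Fin n) ℝ) : 0 ≤ frobInner A A := by
  simpa [frobInner, conjTranspose_eq_transpose_of_trivial] using
    (posSemidef_self_mul_conjTranspose A).trace_nonneg

lemma frobInner_self_eq_zero {A : Matrix (Fin n) (Fin n) ℝ} : frobInner A A = 0 ↔ A = 0 := by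
  simpa [frobInner, conjTranspose_eq_transpose_of_trivial] using
    trace_mul_conjTranspose_self_eq_zero_iff (A := A)

lemma frobNorm_sq (A : Matrix (Fin n) (Fin n) ℝ) : frobNorm A ^ 2 = frobInner A A := by
  rw [frobNorm, Real.sq_sqrt (by positivity)]
  simp [frobInner, trace, mul_apply, sq]

lemma frobInner_sub_sub_self (A B : Matrix (Fin n) (Fin n) ℝ) :
    frobInner (A - B) (A - B) = frobInner A A - 2 * frobInner A B + frobInner B B := by
  rw [frobInner_sub_left, frobInner_sub_right, frobInner_sub_right, frobInner_comm B A]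
  ring

lemma frobNorm_sq_sub_sub (M P Z : Matrix (Fin n) (Fin n) ℝ) :
    frobNorm (M - Z) ^ 2 = frobNorm (M - P) ^ 2 - 2 * frobInner (M - P) (Z - P)
      + frobInner (Z - P) (Z - P) := by
  rw [frobNorm_sq, frobNorm_sq, ← frobInner_sub_sub_self, sub_sub_sub_cancel_right]

lemma isProjOn_of_frobInner_nonpos {K : Set (Matrix (Fin n) (Fin n) ℝ)}
    {M P : Matrix (Fin n) (Fin n) ℝ} (hP : P ∈ K)
    (hvar : ∀ Z ∈ K, frobInner (M - P) (Z - P) ≤ 0) : IsProjOn K M P := by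
  refine ⟨hP, fun Z hZ => ?_⟩
  have h := frobNorm_sq_sub_sub M P Z
  have : frobNorm (M - P) ^ 2 ≤ frobNorm (M - Z) ^ 2 := by
    nlinarith [hvar Z hZ, frobInner_self_nonneg (Z - P)]
  exact (pow_le_pow_iff_left₀ (Real.sqrt_nonneg _) (Real.sqrt_nonneg _) two_ne_zero).mp this

lemma eq_of_isProjOn_of_frobInner_nonpos {K : Set (Matrix (Fin n) (Fin n) ℝ)}
    {M P Q : Matrix (Fin n) (Fin n) ℝ} (hP : P ∈ K)
    (hvar : ∀ Z ∈ K, frobInner (M - P) (Z - P) ≤ 0) (hQ : IsProjOn K M Q) : Q = P := by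
  have hle : frobNorm (M - Q) ^ 2 ≤ frobNorm (M - P) ^ 2 := by
    have := hQ.2 P hP
    gcongr
    exact Real.sqrt_nonneg _
  have h := frobNorm_sq_sub_sub M P Q
  have h0 : frobInner (Q - P) (Q - P) = 0 :=
    le_antisymm (by nlinarith [hvar Q hQ.1]) (frobInner_self_nonneg _)
  exact sub_eq_zero.mp (frobInner_self_eq_zero.mp h0)

end Frobenius

section OrthogonalConj

variable {ι : Type*} [Fintype ι] [DecidableEq ι] {U : Matrix ι ι ℝ}

lemma transpose_mul_conj_diagonal_mul (hU : Uᵀ * U = 1) (d : ι → ℝ) :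
    Uᵀ * (U * diagonal d * Uᵀ) * U = diagonal d := by
  simp only [Matrix.mul_assoc, hU, Matrix.mul_one, ← Matrix.mul_assoc Uᵀ U, Matrix.one_mul]

lemma trace_transpose_mul_mul (hU : Uᵀ * U = 1) (Z : Matrix ι ι ℝ) :
    (Uᵀ * Z * U).trace = Z.trace := by
  rw [trace_mul_comm, ← Matrix.mul_assoc, mul_eq_one_comm.mp hU, Matrix.one_mul]

lemma trace_conj_diagonal (hU : Uᵀ * U = 1) (d : ι → ℝ) :
    (U * diagonal d * Uᵀ).trace = ∑ i, d i := by
  rw [Matrix.mul_assoc, trace_mul_comm, Matrix.mul_assoc, hU, Matrix.mul_one, trace_diagonal]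

lemma rank_conj_diagonal (hU : Uᵀ * U = 1) (d : ι → ℝ) :
    (U * diagonal d * Uᵀ).rank = Fintype.card {i // d i ≠ 0} := by
  have hdet : IsUnit U.det := isUnit_det_of_left_inverse hU
  rw [rank_mul_eq_left_of_isUnit_det _ _ (by rwa [det_transpose]),
    rank_mul_eq_right_of_isUnit_det _ _ hdet, rank_diagonal]

lemma posSemidef_conj_diagonal {d : ι → ℝ} (hd : 0 ≤ d) (U : Matrix ι ι ℝ) :
    (U * diagonal d * Uᵀ).PosSemidef := by
  simpa [conjTranspose_eq_transpose_of_trivial] using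
    (posSemidef_diagonal_iff.mpr hd).mul_mul_conjTranspose_same U

lemma rank_conj_diagonal_posPart (hU : Uᵀ * U = 1) (a : ι → ℝ) :
    (U * diagonal (fun i => (a i)⁺) * Uᵀ).rank = #{i | 0 < a i} := by
  rw [rank_conj_diagonal hU, Fintype.card_subtype]
  congr 1
  ext i
  simp only [Finset.mem_filter, Finset.mem_univ, true_and]
  exact (posPart_nonneg _).lt_iff_ne'.symm.trans posPart_pos_iff

omit [DecidableEq ι] in
lemma diag_transpose_mul_mul_nonneg {Z : Matrix ι ι ℝ} (hZ : Z.PosSemidef)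
    (U : Matrix ι ι ℝ) (i : ι) : 0 ≤ (Uᵀ * Z * U) i i := by
  simpa [conjTranspose_eq_transpose_of_trivial] using (hZ.conjTranspose_mul_mul_same U).diag_nonneg

end OrthogonalConj

lemma _root_.Matrix.PosSemidef.apply_eq_zero_of_diag_eq_zero {ι : Type*} [Fintype ι]
    [DecidableEq ι] {A : Matrix ι ι ℝ} (hA : A.PosSemidef) {i : ι} (hi : A i i = 0) (j : ι) :
    A j i = 0 := by
  have h := (hA.dotProduct_mulVec_zero_iff (Pi.single i 1)).mp (by simpa using hi)
  simpa using congrFun h j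

lemma exists_orthogonal_conj_diagonal_of_block {ι : Type*} [Fintype ι] [DecidableEq ι]
    {A : Matrix ι ι ℝ} (hA : A.IsHermitian) (p : ι → Prop) [DecidablePred p]
    (hAp : ∀ i j, ¬ p i → A j i = 0) {d : ι → ℝ} {c : ℝ} (hd : ∀ i, p i → d i = c) :
    ∃ U : Matrix ι ι ℝ, Uᵀ * U = 1 ∧ ∃ σ : ι → ℝ, (∀ i, ¬ p i → σ i = 0) ∧
      A = U * diagonal σ * Uᵀ ∧ diagonal d = U * diagonal d * Uᵀ := by
  -- `U` is `fromBlocks Q 0 0 1` up to reindexing, where `Q` diagonalizes the `p × p` block.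
  set e := Equiv.sumCompl p
  set R := reindexAlgEquiv ℝ ℝ e.symm
  have hB : (A.submatrix ((↑) : {i // p i} → ι) (↑)).IsHermitian := hA.submatrix _
  set Q : Matrix {i // p i} {i // p i} ℝ := ↑hB.eigenvectorUnitary
  have hQ : Qᵀ * Q = 1 := by
    simpa [Q, star_eq_conjTranspose, conjTranspose_eq_transpose_of_trivial] using
      Unitary.coe_star_mul_self hB.eigenvectorUnitary
  have hQ' : Q * Qᵀ = 1 := mul_eq_one_comm.mp hQ
  have hBQ : A.submatrix (↑) (↑) = Q * diagonal hB.eigenvalues * Qᵀ := by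
    simpa [Unitary.conjStarAlgAut_apply, star_eq_conjTranspose,
      conjTranspose_eq_transpose_of_trivial] using hB.spectral_theorem
  have hRA : R A = fromBlocks (A.submatrix (↑) (↑)) 0 0 0 := by
    ext (i | i) (j | j)
    · rfl
    · exact hAp j i j.2
    · show A i j = 0
      rw [← hA.apply]
      simpa using hAp i j i.2
    · exact hAp j i j.2
  have hRd : R (diagonal d)
      = fromBlocks (c • 1) 0 0 (diagonal fun i : {i // ¬ p i} => d i) := by
    have hde : d ∘ e = Sum.elim (fun _ => c) fun i : {i // ¬ p i} => d i := by
      ext (i | i)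
      · exact hd i i.2
      · rfl
    rw [smul_one_eq_diagonal, fromBlocks_diagonal, ← hde]
    exact submatrix_diagonal_equiv d e
  have hR : ∀ M, R Mᵀ = (R M)ᵀ := fun M => (transpose_reindex _ _ M).symm
  refine ⟨R.symm (fromBlocks Q 0 0 1), R.injective ?_,
    Sum.elim hB.eigenvalues 0 ∘ e.symm, fun i hi => ?_, R.injective ?_, R.injective ?_⟩
  · rw [map_mul, hR, AlgEquiv.apply_symm_apply, map_one, fromBlocks_transpose,
      fromBlocks_multiply]
    simp [hQ, fromBlocks_one]
  · simp [e, hi]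
  · have hRσ : R (diagonal (Sum.elim hB.eigenvalues 0 ∘ e.symm))
        = fromBlocks (diagonal hB.eigenvalues) 0 0 0 := by
      rw [← diagonal_zero, fromBlocks_diagonal]
      simp [R, submatrix_diagonal_equiv]
    rw [hRA, map_mul, map_mul, hR, AlgEquiv.apply_symm_apply, hRσ, fromBlocks_transpose,
      fromBlocks_multiply, fromBlocks_multiply]
    simp [← hBQ]
  · rw [map_mul, map_mul, hR, AlgEquiv.apply_symm_apply, hRd, fromBlocks_transpose,
      fromBlocks_multiply, fromBlocks_multiply]
    simp [hQ']

section Thresholds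

variable {ι : Type*} [Fintype ι] {σ μ : ι → ℝ} {m t : ℝ}

lemma exists_sum_posPart_sub_eq [Nonempty ι] (lam : ι → ℝ) {c : ℝ} (hc : 0 ≤ c) :
    ∃ θ, ∑ i, (lam i - θ)⁺ = c := by
  obtain ⟨i₀⟩ := ‹Nonempty ι›
  set F : ℝ → ℝ := fun θ => ∑ i, (lam i - θ)⁺
  have hF : Continuous F := by fun_prop
  have hlam : ∀ i, lam i ≤ ∑ j, |lam j| := fun i =>
    (le_abs_self _).trans (Finset.single_le_sum (fun j _ => abs_nonneg (lam j)) (Finset.mem_univ i))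
  have hF_top : F (∑ j, |lam j|) = 0 :=
    Finset.sum_eq_zero fun i _ => posPart_eq_zero.mpr (sub_nonpos.mpr (hlam i))
  have hF_bot : c ≤ F (lam i₀ - c) := by
    calc c = (lam i₀ - (lam i₀ - c))⁺ := by rw [sub_sub_cancel, posPart_eq_self.mpr hc]
      _ ≤ F (lam i₀ - c) :=
        Finset.single_le_sum (fun i _ => posPart_nonneg (lam i - (lam i₀ - c))) (Finset.mem_univ i₀)
  obtain ⟨θ, -, hθ⟩ := intermediate_value_Icc' (by linarith [hlam i₀]) hF.continuousOn
    ⟨hF_top.le.trans hc, hF_bot⟩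
  exact ⟨θ, hθ⟩

lemma card_filter_eq_le_card_filter_pos (ht : 0 ≤ t) (hσ : ∀ i, 0 ≤ σ i) (hm : ∀ i, m ≤ μ i) {θ : ℝ}
    (hθ : ∑ i, σ i < ∑ i, (σ i - t * μ i - θ)⁺) :
    #{i | μ i = m} ≤ #{i | 0 < σ i - t * μ i - θ} := by
  -- Unless `θ < -t m`, every thresholded entry is at most `σ i`, contradicting `hθ`.
  by_cases hθm : θ < -(t * m)
  · refine Finset.card_le_card fun i => ?_
    simp only [Finset.mem_filter, Finset.mem_univ, true_and]
    rintro rfl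
    linarith [hσ i]
  · refine absurd hθ (not_lt.mpr (Finset.sum_le_sum fun i _ => ?_))
    rw [posPart_def]
    refine sup_le ?_ (hσ i)
    nlinarith [mul_nonneg ht (sub_nonneg.mpr (hm i))]

lemma exists_threshold_of_support (ht : 0 < t) (hσμ : ∀ i, μ i ≠ m → σ i = 0)
    (hm : ∀ i, m ≤ μ i) {i₀ : ι} (hi₀ : μ i₀ = m) :
    ∃ θ, ∑ i, σ i < ∑ i, (σ i - t * μ i - θ)⁺ ∧ ∀ i, 0 < σ i - t * μ i - θ → μ i = m := by
  obtain ⟨δ, hδ, hδμ⟩ : ∃ δ > 0, ∀ i, μ i ≠ m → δ < μ i - m := by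
    have h : ∀ᶠ δ in 𝓝 (0 : ℝ), ∀ i, μ i ≠ m → δ < μ i - m := by
      refine Filter.eventually_all.2 fun i => ?_
      by_cases hi : μ i = m
      · exact Filter.Eventually.of_forall fun _ h => absurd hi h
      · exact (eventually_lt_nhds (sub_pos.mpr ((hm i).lt_of_ne' hi))).mono fun _ h _ => h
    exact (eventually_mem_nhdsWithin.and (nhdsWithin_le_nhds h) :
      ∀ᶠ δ in 𝓝[Set.Ioi 0] (0 : ℝ), δ ∈ Set.Ioi 0 ∧ _).exists
  -- The threshold `-t (m + δ)` separates the indices with `μ i = m` from all others.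
  have hval : ∀ i, σ i - t * μ i - (-(t * m) - t * δ) = σ i + t * (δ - (μ i - m)) :=
    fun i => by ring
  have hneg : ∀ i, μ i ≠ m → σ i - t * μ i - (-(t * m) - t * δ) < 0 := fun i hi => by
    rw [hval, hσμ i hi, zero_add]
    exact mul_neg_of_pos_of_neg ht (sub_neg.mpr (hδμ i hi))
  refine ⟨-(t * m) - t * δ, Finset.sum_lt_sum (fun i _ => ?_) ⟨i₀, Finset.mem_univ _, ?_⟩,
    fun i hi => by_contra fun h => (hneg i h).not_gt hi⟩
  · by_cases hi : μ i = m
    · refine le_trans ?_ (le_posPart _)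
      rw [hval, hi, sub_self, sub_zero]
      linarith [mul_pos ht hδ]
    · rw [hσμ i hi]
      exact posPart_nonneg _
  · refine lt_of_lt_of_le ?_ (le_posPart _)
    rw [hval, hi₀, sub_self, sub_zero]
    linarith [mul_pos ht hδ]

end Thresholds

lemma antitone_apply_eq_last_iff {n r : ℕ} (hrn : r < n) {μ : Fin n → ℝ} (hμ : Antitone μ)
    {j last : Fin n} (hj : (j : ℕ) = n - r - 1) (hlast : (last : ℕ) = n - 1) :
    μ j = μ last ↔ r < #{i | μ i = μ last} := by
  have hle_last : ∀ i, i ≤ last := fun i => Fin.le_def.mpr (by omega)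
  constructor
  · intro hμj
    calc r < #(Finset.Ici j) := by rw [Fin.card_Ici]; omega
      _ ≤ #{i | μ i = μ last} := Finset.card_le_card fun i hi => by
        simp only [Finset.mem_Ici, Finset.mem_filter, Finset.mem_univ, true_and] at hi ⊢
        exact le_antisymm (hμj ▸ hμ hi) (hμ (hle_last i))
  · intro hcard
    by_contra hμj
    refine absurd hcard (not_lt.mpr ?_)
    calc #{i | μ i = μ last} ≤ #(Finset.Ioi j) := Finset.card_le_card fun i hi => by
          simp only [Finset.mem_Ioi, Finset.mem_filter, Finset.mem_univ, true_and] at hi ⊢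
          by_contra hij
          exact hμj (le_antisymm (hi ▸ hμ (not_lt.mp hij)) (hμ (hle_last j)))
      _ = r := by rw [Fin.card_Ioi]; omega

section Spectrahedron

variable {n : ℕ}

lemma frobInner_conj_diagonal (U : Matrix (Fin n) (Fin n) ℝ) (d : Fin n → ℝ)
    (Z : Matrix (Fin n) (Fin n) ℝ) :
    frobInner (U * diagonal d * Uᵀ) Z = ∑ i, d i * (Uᵀ * Z * U) i i := by
  rw [frobInner, show U * diagonal d * Uᵀ * Zᵀ = U * (diagonal d * (Uᵀ * Zᵀ)) by
      simp only [Matrix.mul_assoc], trace_mul_comm,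
    show diagonal d * (Uᵀ * Zᵀ) * U = diagonal d * (Uᵀ * Z * U)ᵀ by
      simp only [transpose_mul, transpose_transpose, Matrix.mul_assoc]]
  simp only [trace, diag_apply, diagonal_mul, transpose_apply]

lemma convex_spectrahedron : Convex ℝ (spectrahedron n) := by
  rintro X ⟨hX, hXtr⟩ Y ⟨hY, hYtr⟩ a b ha hb hab
  exact ⟨(hX.smul ha).add (hY.smul hb), by simp [trace_add, trace_smul, hXtr, hYtr, hab]⟩

lemma mem_scaledSpectrahedron_iff {c : ℝ} (hc : 0 < c) {X : Matrix (Fin n) (Fin n) ℝ} :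
    X ∈ scaledSpectrahedron n c ↔ X.PosSemidef ∧ X.trace = c := by
  constructor
  · rintro ⟨Y, ⟨hY, hYtr⟩, rfl⟩
    exact ⟨hY.smul hc.le, by rw [trace_smul, hYtr, smul_eq_mul, mul_one]⟩
  · rintro ⟨hX, hXtr⟩
    refine ⟨c⁻¹ • X, ⟨hX.smul (inv_nonneg.mpr hc.le), ?_⟩, ?_⟩
    · rw [trace_smul, hXtr, smul_eq_mul, inv_mul_cancel₀ hc.ne']
    · rw [smul_smul, mul_inv_cancel₀ hc.ne', one_smul]

theorem isProjOn_scaledSpectrahedron_iff {U : Matrix (Fin n) (Fin n) ℝ} (hU : Uᵀ * U = 1)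
    (lam : Fin n → ℝ) {θ c : ℝ} (hc : 0 < c) (hθ : ∑ i, (lam i - θ)⁺ = c)
    {P : Matrix (Fin n) (Fin n) ℝ} :
    IsProjOn (scaledSpectrahedron n c) (U * diagonal lam * Uᵀ) P ↔
      P = U * diagonal (fun i => (lam i - θ)⁺) * Uᵀ := by
  set p : Fin n → ℝ := fun i => (lam i - θ)⁺
  have hP : U * diagonal p * Uᵀ ∈ scaledSpectrahedron n c :=
    (mem_scaledSpectrahedron_iff hc).mpr
      ⟨posSemidef_conj_diagonal (fun i => posPart_nonneg _) U, by rw [trace_conj_diagonal hU, hθ]⟩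
  have hres : U * diagonal lam * Uᵀ - U * diagonal p * Uᵀ
      = U * diagonal (fun i => min (lam i) θ) * Uᵀ := by
    rw [← Matrix.sub_mul, ← Matrix.mul_sub, diagonal_sub]
    congr 3
    funext i
    exact (inf_eq_sub_posPart_sub _ _).symm
  have hvar : ∀ Z ∈ scaledSpectrahedron n c,
      frobInner (U * diagonal lam * Uᵀ - U * diagonal p * Uᵀ) (Z - U * diagonal p * Uᵀ) ≤ 0 := by
    intro Z hZ
    obtain ⟨hZpsd, hZtr⟩ := (mem_scaledSpectrahedron_iff hc).mp hZ
    have hZsum : ∑ i, (Uᵀ * Z * U) i i = c := (trace_transpose_mul_mul hU Z).trans hZtr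
    have hmin_eq : ∀ i, min (lam i) θ * p i = θ * p i := by
      intro i
      rcases le_total (lam i) θ with h | h
      · simp [p, posPart_eq_zero.mpr (sub_nonpos.mpr h)]
      · rw [min_eq_right h]
    rw [hres, frobInner_sub_right, frobInner_conj_diagonal, frobInner_conj_diagonal,
      transpose_mul_conj_diagonal_mul hU]
    simp only [diagonal_apply_eq, hmin_eq, ← Finset.mul_sum, hθ]
    calc ∑ i, min (lam i) θ * (Uᵀ * Z * U) i i - θ * c
        ≤ ∑ i, θ * (Uᵀ * Z * U) i i - θ * c := by
          gcongr with i
          · exact diag_transpose_mul_mul_nonneg hZpsd U i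
          · exact min_le_right _ _
      _ = 0 := by rw [← Finset.mul_sum, hZsum, sub_self]
  refine ⟨fun hQ => eq_of_isProjOn_of_frobInner_nonpos hP hvar hQ, ?_⟩
  rintro rfl
  exact isProjOn_of_frobInner_nonpos hP hvar

end Spectrahedron

lemma eq_zero_of_sum_mul_le_mul_sum {ι : Type*} [Fintype ι] {a μ : ι → ℝ} {m : ℝ}
    (ha : ∀ i, 0 ≤ a i) (hm : ∀ i, m ≤ μ i) (h : ∑ i, μ i * a i ≤ m * ∑ i, a i)
    {i : ι} (hi : μ i ≠ m) : a i = 0 := by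
  have hterm : ∀ j ∈ Finset.univ, 0 ≤ (μ j - m) * a j :=
    fun j _ => mul_nonneg (sub_nonneg.mpr (hm j)) (ha j)
  have hsum : ∑ j, (μ j - m) * a j = 0 := by
    refine le_antisymm ?_ (Finset.sum_nonneg hterm)
    simpa [sub_mul, Finset.sum_sub_distrib, Finset.mul_sum] using h
  have := (Finset.sum_eq_zero_iff_of_nonneg hterm).mp hsum i (Finset.mem_univ i)
  exact (mul_eq_zero.mp this).resolve_left (sub_ne_zero.mpr hi)

section Minimizer

variable {n : ℕ} {f : Matrix (Fin n) (Fin n) ℝ → ℝ}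
  {g : Matrix (Fin n) (Fin n) ℝ → Matrix (Fin n) (Fin n) ℝ}

lemma IsEigenDecomp.exists_conj_diagonal {M : Matrix (Fin n) (Fin n) ℝ} {lam : Fin n → ℝ}
    {v : Fin n → Fin n → ℝ} (h : IsEigenDecomp M lam v) :
    ∃ U : Matrix (Fin n) (Fin n) ℝ, Uᵀ * U = 1 ∧ M = U * diagonal lam * Uᵀ := by
  obtain ⟨-, horth, rfl⟩ := h
  refine ⟨(of v)ᵀ, ?_, ?_⟩
  · ext i j
    simpa [mul_apply, one_apply] using horth i j
  · ext k l
    simp [Matrix.sum_apply, mul_apply, diagonal_apply, vecMulVec, mul_comm, mul_left_comm]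

lemma IsMinimizerOn.frobInner_sub_nonneg (hgrad : IsGradient f g)
    {S : Set (Matrix (Fin n) (Fin n) ℝ)} (hS : Convex ℝ S) {X Z : Matrix (Fin n) (Fin n) ℝ}
    (hmin : IsMinimizerOn f S X) (hZ : Z ∈ S) : 0 ≤ frobInner (g X) (Z - X) := by
  have hloc : IsLocalMinOn (fun t : ℝ => f (X + t • (Z - X))) (Set.Icc 0 1) 0 := by
    refine IsMinOn.localize fun t ht => ?_
    simpa using hmin.2 _ (hS.add_smul_sub_mem hmin.1 hZ ht)
  have hcone : (1 : ℝ) ∈ posTangentConeAt (Set.Icc (0 : ℝ) 1) 0 :=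
    mem_posTangentConeAt_of_segment_subset (by rw [zero_add, segment_eq_Icc zero_le_one])
  simpa using hloc.hasFDerivWithinAt_nonneg (hgrad X (Z - X)).hasFDerivAt.hasFDerivWithinAt hcone

/-- A minimizer over `S_n` lives in the bottom eigenspace of its gradient. -/
lemma IsMinimizerOn.transpose_mul_mul_apply_eq_zero (hgrad : IsGradient f g)
    {X U : Matrix (Fin n) (Fin n) ℝ} (hmin : IsMinimizerOn f (spectrahedron n) X)
    (hU : Uᵀ * U = 1) {μ : Fin n → ℝ} (hG : g X = U * diagonal μ * Uᵀ) {i₀ : Fin n}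
    (hi₀ : ∀ i, μ i₀ ≤ μ i) {i : Fin n} (hi : μ i ≠ μ i₀) (j : Fin n) :
    (Uᵀ * X * U) j i = 0 := by
  obtain ⟨hXpsd, hXtr⟩ := hmin.1
  set e : Fin n → ℝ := Pi.single i₀ 1
  have hZ : U * diagonal e * Uᵀ ∈ spectrahedron n :=
    ⟨posSemidef_conj_diagonal (Pi.single_nonneg.mpr zero_le_one) U,
      by rw [trace_conj_diagonal hU]; simp [e]⟩
  have hopt := hmin.frobInner_sub_nonneg hgrad convex_spectrahedron hZ
  rw [frobInner_sub_right, hG, frobInner_conj_diagonal, frobInner_conj_diagonal,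
    transpose_mul_conj_diagonal_mul hU] at hopt
  have hsum : ∑ k, (Uᵀ * X * U) k k = 1 := (trace_transpose_mul_mul hU X).trans hXtr
  have hii : (Uᵀ * X * U) i i = 0 := by
    refine eq_zero_of_sum_mul_le_mul_sum (fun k => diag_transpose_mul_mul_nonneg hXpsd U k)
      hi₀ ?_ hi
    simpa [e, hsum, Pi.single_apply] using hopt
  exact (hXpsd.conjTranspose_mul_mul_same U).apply_eq_zero_of_diag_eq_zero hii j

lemma IsMinimizerOn.exists_common_eigenbasis (hgrad : IsGradient f g)
    {X : Matrix (Fin n) (Fin n) ℝ} (hmin : IsMinimizerOn f (spectrahedron n) X)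
    {μ : Fin n → ℝ} {w : Fin n → Fin n → ℝ} (hμ : IsEigenDecomp (g X) μ w) {i₀ : Fin n}
    (hi₀ : ∀ i, μ i₀ ≤ μ i) :
    ∃ V : Matrix (Fin n) (Fin n) ℝ, Vᵀ * V = 1 ∧
      ∃ σ : Fin n → ℝ, (∀ i, 0 ≤ σ i) ∧ ∑ i, σ i = 1 ∧ (∀ i, μ i ≠ μ i₀ → σ i = 0) ∧
        X = V * diagonal σ * Vᵀ ∧ g X = V * diagonal μ * Vᵀ := by
  obtain ⟨hXpsd, hXtr⟩ := hmin.1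
  obtain ⟨U, hU, hG⟩ := hμ.exists_conj_diagonal
  have hA : (Uᵀ * X * U).IsHermitian := by
    simpa [conjTranspose_eq_transpose_of_trivial] using
      (hXpsd.conjTranspose_mul_mul_same U).isHermitian
  obtain ⟨U', hU', σ, hσ, hXσ, hμU'⟩ := exists_orthogonal_conj_diagonal_of_block hA
    (fun i => μ i = μ i₀)
    (fun i j hi => hmin.transpose_mul_mul_apply_eq_zero hgrad hU hG hi₀ hi j)
    (d := μ) (fun _ hi => hi)
  have hconj : ∀ D, U * (U' * D * U'ᵀ) * Uᵀ = (U * U') * D * (U * U')ᵀ := fun D => by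
    simp only [transpose_mul, Matrix.mul_assoc]
  have hX : X = (U * U') * diagonal σ * (U * U')ᵀ := by
    rw [← hconj, ← hXσ]
    simp only [← Matrix.mul_assoc, mul_eq_one_comm.mp hU, Matrix.one_mul]
    simp only [Matrix.mul_assoc, mul_eq_one_comm.mp hU, Matrix.mul_one]
  have hV : (U * U')ᵀ * (U * U') = 1 := by
    rw [transpose_mul, Matrix.mul_assoc, ← Matrix.mul_assoc Uᵀ, hU, Matrix.one_mul, hU']
  refine ⟨U * U', hV, σ, fun i => ?_, ?_, hσ, hX, by rw [hG, ← hconj, ← hμU']⟩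
  · have := diag_transpose_mul_mul_nonneg hXpsd (U * U') i
    rwa [hX, transpose_mul_conj_diagonal_mul hV, diagonal_apply_eq] at this
  · rw [← trace_conj_diagonal hV, ← hX, hXtr]

end Minimizer

/-- μ_{n-r} = μ_n iff for every ζ > 0 the projection of
X* − β⁻¹∇f(X*) onto (1+ζ)S_n has rank larger than r. -/
theorem stmt7 (n r : ℕ) (hrn : r < n) (β : ℝ) (hβ : 0 < β)
    (f : Matrix (Fin n) (Fin n) ℝ → ℝ)
    (g : Matrix (Fin n) (Fin n) ℝ → Matrix (Fin n) (Fin n) ℝ)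
    (hgrad : IsGradient f g)
    (Xstar : Matrix (Fin n) (Fin n) ℝ)
    (hmin : IsMinimizerOn f (spectrahedron n) Xstar)
    (mu : Fin n → ℝ) (w : Fin n → Fin n → ℝ)
    (hmu : IsEigenDecomp (g Xstar) mu w) :
    mu ⟨n - r - 1, by omega⟩ = mu ⟨n - 1, by omega⟩ ↔
      ∀ ζ : ℝ, 0 < ζ → ∀ P : Matrix (Fin n) (Fin n) ℝ,
        IsProjOn (scaledSpectrahedron n (1 + ζ)) (Xstar - β⁻¹ • g Xstar) P →
        r < P.rank := by
  have hlast : ∀ i, mu ⟨n - 1, by omega⟩ ≤ mu i := fun i =>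
    hmu.1 (Fin.le_def.mpr (by have := i.isLt; dsimp; omega))
  obtain ⟨V, hV, σ, hσ, hσsum, hσμ, hX, hG⟩ := hmin.exists_common_eigenbasis hgrad hmu hlast
  have hM : Xstar - β⁻¹ • g Xstar = V * diagonal (fun i => σ i - β⁻¹ * mu i) * Vᵀ := by
    rw [hG, hX, ← Matrix.smul_mul, ← Matrix.mul_smul, ← Matrix.sub_mul, ← Matrix.mul_sub,
      ← diagonal_smul, diagonal_sub]
    rfl
  rw [antitone_apply_eq_last_iff hrn hmu.1 rfl rfl]
  constructor
  · intro hcard ζ hζ P hP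
    have : Nonempty (Fin n) := ⟨⟨n - 1, by omega⟩⟩
    obtain ⟨θ, hθ⟩ :=
      exists_sum_posPart_sub_eq (fun i => σ i - β⁻¹ * mu i) (by linarith : 0 ≤ 1 + ζ)
    rw [hM, isProjOn_scaledSpectrahedron_iff hV _ (by linarith) hθ] at hP
    rw [hP, rank_conj_diagonal_posPart hV]
    exact hcard.trans_le (card_filter_eq_le_card_filter_pos (inv_nonneg.mpr hβ.le) hσ hlast
      (by rw [hσsum, hθ]; linarith))
  · intro hproj
    by_contra hcard
    obtain ⟨θ, hsum, hsupp⟩ := exists_threshold_of_support (inv_pos.mpr hβ) hσμ hlast rfl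
    set c := ∑ i, (σ i - β⁻¹ * mu i - θ)⁺
    have hP := (isProjOn_scaledSpectrahedron_iff hV (fun i => σ i - β⁻¹ * mu i)
      (by linarith : 0 < 1 + (c - 1)) (by ring)).mpr rfl
    have hrank := hproj (c - 1) (by linarith) _ (hM ▸ hP)
    rw [rank_conj_diagonal_posPart hV] at hrank
    exact hcard (hrank.trans_le (Finset.card_le_card fun i => by simpa using hsupp i))

end LRSGD
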